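/- Let T ⊂ ℝ³ be a bounded open set with positive Lebesgue measure. Suppose w(x) = 2(a·x)x − |x|²a + ρx + Qx + b with a, b ∈ ℝ³, ρ ∈ ℝ, Q ∈ 𝔰𝔬(3), and suppose ∫_T w dx = 0, ∫_T div(w) dx = 0, ∫_T curl(w) dx = 0, and ∫_T curl(curl(w)) dx = 0. Then a = 0, ρ = 0, Q = 0, b = 0, and hence w = 0. -/

import Mathlib

/-!
The field `w` is a quadratic polynomial with Jacobian
`∂ᵢwⱼ = 2aᵢxⱼ − 2xᵢaⱼ + (2a·x + ρ)δᵢⱼ + Qⱼᵢ`. Hence `curl w = 4a × x + q`, where `q` comes from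
the antisymmetric part of `Q`, so `curl curl w = 8a` is constant. An integral of a constant over
a set of positive finite measure vanishes only when the constant does, so `a = 0`; then
`curl w = q` gives `Q = 0` since `Q` is skew, `div w = 3ρ` gives `ρ = 0`, and `w = b` gives `b = 0`.
-/

open MeasureTheory Real Filter Matrix

noncomputable def pd (i : Fin 3) (f : (Fin 3 → ℝ) → ℝ) (x : Fin 3 → ℝ) : ℝ :=
  fderiv ℝ f x (Pi.single i 1)

def dot3 (a x : Fin 3 → ℝ) : ℝ := ∑ i, a i * x i

noncomputable def divg (w : (Fin 3 → ℝ) → Fin 3 → ℝ) (x : Fin 3 → ℝ) : ℝ :=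
  ∑ i, pd i (fun y => w y i) x

noncomputable def curl3 (w : (Fin 3 → ℝ) → Fin 3 → ℝ) (x : Fin 3 → ℝ) : Fin 3 → ℝ :=
  ![pd 1 (fun y => w y 2) x - pd 2 (fun y => w y 1) x,
    pd 2 (fun y => w y 0) x - pd 0 (fun y => w y 2) x,
    pd 0 (fun y => w y 1) x - pd 1 (fun y => w y 0) x]

noncomputable def tfsym (u : (Fin 3 → ℝ) → Fin 3 → ℝ) (x : Fin 3 → ℝ) (i j : Fin 3) : ℝ :=
  (pd i (fun y => u y j) x + pd j (fun y => u y i) x) / 2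
    - (1 / 3) * divg u x * (if i = j then 1 else 0)

/-- The conformal Killing field `x ↦ 2(a·x)x − |x|²a + ρx + Qx + b`. -/
def ckField (a b : Fin 3 → ℝ) (ρ : ℝ) (Q : Matrix (Fin 3) (Fin 3) ℝ) :
    (Fin 3 → ℝ) → Fin 3 → ℝ :=
  fun x j => 2 * dot3 a x * x j - dot3 x x * a j + ρ * x j + Q.mulVec x j + b j

lemma pd_eq_of_hasFDerivAt {f : (Fin 3 → ℝ) → ℝ} {f' : (Fin 3 → ℝ) →L[ℝ] ℝ}
    {x : Fin 3 → ℝ} (h : HasFDerivAt f f' x) (i : Fin 3) : pd i f x = f' (Pi.single i 1) := by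
  rw [pd, h.fderiv]

lemma pd_apply_of_hasFDerivAt {F : (Fin 3 → ℝ) → Fin 3 → ℝ}
    {F' : (Fin 3 → ℝ) →L[ℝ] Fin 3 → ℝ} {x : Fin 3 → ℝ} (h : HasFDerivAt F F' x) (i j : Fin 3) :
    pd i (fun y => F y j) x = F' (Pi.single i 1) j :=
  pd_eq_of_hasFDerivAt (hasFDerivAt_pi'.1 h j) i

lemma curl3_cross_add_const (c q x : Fin 3 → ℝ) :
    curl3 (fun y => c ⨯₃ y + q) x = (2 : ℝ) • c := by
  have h : HasFDerivAt (fun y => c ⨯₃ y + q)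
      (LinearMap.toContinuousLinearMap (crossProduct c)) x :=
    (LinearMap.toContinuousLinearMap (crossProduct c)).hasFDerivAt.add_const q
  ext i
  simp only [curl3, pd_apply_of_hasFDerivAt h]
  fin_cases i <;> simp [cross_apply] <;> ring

lemma hasFDerivAt_dot3 (a x : Fin 3 → ℝ) :
    HasFDerivAt (dot3 a) (∑ k, a k • (ContinuousLinearMap.proj k : (Fin 3 → ℝ) →L[ℝ] ℝ)) x :=
  HasFDerivAt.fun_sum fun k _ => (hasFDerivAt_apply k x).const_mul (a k)

lemma hasFDerivAt_dot3_self (x : Fin 3 → ℝ) :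
    HasFDerivAt (fun y => dot3 y y)
      (∑ k, (2 * x k) • (ContinuousLinearMap.proj k : (Fin 3 → ℝ) →L[ℝ] ℝ)) x := by
  refine HasFDerivAt.fun_sum fun k _ =>
    ((hasFDerivAt_apply k x).fun_mul (hasFDerivAt_apply k x)).congr_fderiv ?_
  ext v
  simp only [_root_.add_apply, _root_.smul_apply, ContinuousLinearMap.proj_apply, smul_eq_mul]
  ring

lemma pd_ckField (a b : Fin 3 → ℝ) (ρ : ℝ) (Q : Matrix (Fin 3) (Fin 3) ℝ) (x : Fin 3 → ℝ)
    (i j : Fin 3) :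
    pd i (fun y => ckField a b ρ Q y j) x
      = 2 * a i * x j - 2 * x i * a j + (2 * dot3 a x + ρ) * (if i = j then 1 else 0)
        + Q j i := by
  -- `Q.mulVec y j` unfolds to `dot3 (Q j) y`
  have h : HasFDerivAt (fun y => ckField a b ρ Q y j) _ x :=
    ((((((hasFDerivAt_dot3 a x).const_mul 2).fun_mul (hasFDerivAt_apply j x)).fun_sub
      ((hasFDerivAt_dot3_self x).mul_const (a j))).fun_add
      ((hasFDerivAt_apply j x).const_mul ρ)).fun_add (hasFDerivAt_dot3 (Q j) x)).add_const (b j)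
  rw [pd_eq_of_hasFDerivAt h i]
  simp only [_root_.add_apply, _root_.sub_apply, _root_.smul_apply, ContinuousLinearMap.proj_apply,
    _root_.sum_apply, Pi.single_apply, eq_comm, smul_eq_mul, mul_ite, mul_one, mul_zero,
    Finset.sum_ite_eq, Finset.mem_univ, ↓reduceIte]
  split_ifs <;> ring

/-- The curl of `x ↦ Q *ᵥ x`; for skew `Q` it is twice the axial vector of `Q`. -/
def skewAxial (Q : Matrix (Fin 3) (Fin 3) ℝ) : Fin 3 → ℝ :=
  ![Q 2 1 - Q 1 2, Q 0 2 - Q 2 0, Q 1 0 - Q 0 1]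

lemma curl3_ckField (a b : Fin 3 → ℝ) (ρ : ℝ) (Q : Matrix (Fin 3) (Fin 3) ℝ) :
    curl3 (ckField a b ρ Q) = fun x => ((4 : ℝ) • a) ⨯₃ x + skewAxial Q := by
  ext x i
  fin_cases i <;> simp [curl3, pd_ckField, cross_apply, skewAxial] <;> ring

lemma curl3_curl3_ckField (a b : Fin 3 → ℝ) (ρ : ℝ) (Q : Matrix (Fin 3) (Fin 3) ℝ)
    (x : Fin 3 → ℝ) : curl3 (curl3 (ckField a b ρ Q)) x = (8 : ℝ) • a := by
  rw [curl3_ckField, curl3_cross_add_const, smul_smul]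
  norm_num

lemma divg_ckField (a b : Fin 3 → ℝ) (ρ : ℝ) (Q : Matrix (Fin 3) (Fin 3) ℝ) (x : Fin 3 → ℝ) :
    divg (ckField a b ρ Q) x = 6 * dot3 a x + 3 * ρ + Q.trace := by
  simp only [divg, pd_ckField, dot3, Fin.sum_univ_three, Matrix.trace, Matrix.diag_apply,
    ↓reduceIte, mul_one]
  ring

lemma ckField_zero_zero_zero (b : Fin 3 → ℝ) : ckField 0 b 0 0 = fun _ => b := by
  ext x j
  simp [ckField, dot3]

lemma eq_zero_of_skewAxial_eq_zero {Q : Matrix (Fin 3) (Fin 3) ℝ} (hQ : Qᵀ = -Q)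
    (h : skewAxial Q = 0) : Q = 0 := by
  have hskew : ∀ i j, Q j i = -Q i j := fun i j => congrFun (congrFun hQ i) j
  have h0 := congrFun h 0
  have h1 := congrFun h 1
  have h2 := congrFun h 2
  simp only [skewAxial, Fin.isValue, cons_val_zero, cons_val_one, cons_val, Pi.zero_apply]
    at h0 h1 h2
  ext i j
  fin_cases i <;> fin_cases j <;>
    simp only [Fin.zero_eta, Fin.mk_one, Fin.reduceFinMk, Fin.isValue, Matrix.zero_apply] <;>
    linarith [hskew 0 0, hskew 1 1, hskew 2 2, hskew 0 1, hskew 0 2, hskew 1 2]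

lemma const_eq_zero_of_setIntegral_eq_zero {α E : Type*} [MeasurableSpace α]
    [NormedAddCommGroup E] [NormedSpace ℝ E] [CompleteSpace E] {μ : Measure α} {s : Set α}
    (hs0 : μ s ≠ 0) (hs : μ s ≠ ⊤) {c : E} (h : ∫ _ in s, c ∂μ = 0) : c = 0 := by
  rw [setIntegral_const] at h
  exact (smul_eq_zero.mp h).resolve_left (ENNReal.toReal_ne_zero.2 ⟨hs0, hs⟩)

theorem stmt4_general (T : Set (Fin 3 → ℝ))
    (hTb : Bornology.IsBounded T) (hTpos : 0 < volume T)
    (a b : Fin 3 → ℝ) (ρ : ℝ) (Q : Matrix (Fin 3) (Fin 3) ℝ) (hQ : Qᵀ = -Q)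
    (h1 : ∀ i, (∫ x in T, ckField a b ρ Q x i) = 0)
    (h2 : (∫ x in T, divg (ckField a b ρ Q) x) = 0)
    (h3 : ∀ i, (∫ x in T, curl3 (ckField a b ρ Q) x i) = 0)
    (h4 : ∀ i, (∫ x in T, curl3 (curl3 (ckField a b ρ Q)) x i) = 0) :
    a = 0 ∧ ρ = 0 ∧ Q = 0 ∧ b = 0 ∧ ∀ x, ckField a b ρ Q x = 0 := by
  have hT0 : volume T ≠ 0 := hTpos.ne'
  have hT : volume T ≠ ⊤ := hTb.measure_lt_top.ne
  obtain rfl : a = 0 := funext fun i => by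
    have h8a := h4 i
    simp only [curl3_curl3_ckField, Pi.smul_apply, smul_eq_mul] at h8a
    simpa using const_eq_zero_of_setIntegral_eq_zero hT0 hT h8a
  obtain rfl : Q = 0 := eq_zero_of_skewAxial_eq_zero hQ <| funext fun i => by
    have hQi := h3 i
    simp only [curl3_ckField, smul_zero, map_zero, LinearMap.zero_apply, zero_add] at hQi
    exact const_eq_zero_of_setIntegral_eq_zero hT0 hT hQi
  obtain rfl : ρ = 0 := by
    have h3ρ := h2
    simp only [divg_ckField, dot3, Pi.zero_apply, zero_mul, Finset.sum_const_zero, mul_zero,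
      Matrix.trace_zero, zero_add, add_zero] at h3ρ
    simpa using const_eq_zero_of_setIntegral_eq_zero hT0 hT h3ρ
  obtain rfl : b = 0 := funext fun i => by
    have hbi := h1 i
    simp only [ckField_zero_zero_zero] at hbi
    exact const_eq_zero_of_setIntegral_eq_zero hT0 hT hbi
  exact ⟨rfl, rfl, rfl, rfl, fun x => congrFun (ckField_zero_zero_zero 0) x⟩

theorem stmt4 (T : Set (Fin 3 → ℝ)) (hTo : IsOpen T)
    (hTb : Bornology.IsBounded T) (hTpos : 0 < volume T)
    (a b : Fin 3 → ℝ) (ρ : ℝ) (Q : Matrix (Fin 3) (Fin 3) ℝ) (hQ : Qᵀ = -Q)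
    (h1 : ∀ i, (∫ x in T, ckField a b ρ Q x i) = 0)
    (h2 : (∫ x in T, divg (ckField a b ρ Q) x) = 0)
    (h3 : ∀ i, (∫ x in T, curl3 (ckField a b ρ Q) x i) = 0)
    (h4 : ∀ i, (∫ x in T, curl3 (curl3 (ckField a b ρ Q)) x i) = 0) :
    a = 0 ∧ ρ = 0 ∧ Q = 0 ∧ b = 0 ∧ ∀ x, ckField a b ρ Q x = 0 :=
  stmt4_general T hTb hTpos a b ρ Q hQ h1 h2 h3 h4
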